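/- arXiv:1902.01856 — 6 statements merged into one kernel-verified Lean document; each statement's English description precedes it below -/
import Mathlib

section
/- Let m ≥ 1, let f : ℝ^m → ℝ be differentiable with gradient ∇f Lipschitz continuous with constant L > 0, let g_j : ℝ → ℝ for j = 1,…,m, and set F(x) = f(x) + Σ_{j=1}^m g_j(x_j). Fix η > 0, points y, ŷ ∈ ℝ^m, and a coordinate index j. Suppose x⁺ ∈ ℝ^m satisfies x⁺_i = y_i for all i ≠ j, and x⁺_j minimizes the function t ↦ (∂_j f(ŷ))·(t − y_j) + (1/(2η))(t − y_j)² + g_j(t) over ℝ, where ∂_j f(z) denotes the j-th partial derivative of f at z. Then F(x⁺) ≤ F(y) + (x⁺_j − y_j)·(∂_j f(y) − ∂_j f(ŷ)) + (L/2 − 1/(2η))·‖x⁺ − y‖². -/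
open scoped RealInnerProductSpace

section descent

variable {E : Type*} [NormedAddCommGroup E] [InnerProductSpace ℝ E] [CompleteSpace E]

/-- Descent lemma: Lipschitz gradient gives quadratic upper bound. -/
lemma descent_lemma (f : E → ℝ) (L : ℝ) (hL : 0 < L)
    (hf : Differentiable ℝ f)
    (hLip : ∀ u w : E, ‖gradient f u - gradient f w‖ ≤ L * ‖u - w‖)
    (y x : E) :
    f x ≤ f y + ⟪gradient f y, x - y⟫ + L / 2 * ‖x - y‖ ^ 2 := by
  set d := x - y with hd
  have hgradLip : LipschitzWith (Real.toNNReal L) (gradient f) := by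
    apply LipschitzWith.of_dist_le_mul
    intro u w
    rw [dist_eq_norm, dist_eq_norm, Real.coe_toNNReal _ hL.le]
    exact hLip u w
  have hgc : Continuous (gradient f) := hgradLip.continuous
  have key : ∀ t : ℝ, HasDerivAt (fun t : ℝ => f (y + t • d))
      ⟪gradient f (y + t • d), d⟫ t := by
    intro t
    have h1 : HasDerivAt (fun t : ℝ => y + t • d) d t := by
      simpa using ((hasDerivAt_id t).smul_const d).const_add y
    have h2 := (hf (y + t • d)).hasGradientAt
    have h3 := h2.hasFDerivAt.comp_hasDerivAt t h1
    simpa [InnerProductSpace.toDual_apply_apply, Function.comp_def] using h3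
  have hcontI : Continuous (fun t : ℝ => ⟪gradient f (y + t • d), d⟫) := by
    exact (Continuous.inner (hgc.comp (by continuity)) continuous_const)
  have heq : f (y + (1:ℝ) • d) - f (y + (0:ℝ) • d) =
      ∫ t in (0:ℝ)..1, ⟪gradient f (y + t • d), d⟫ := by
    exact (intervalIntegral.integral_eq_sub_of_hasDerivAt (fun t _ => key t)
      (hcontI.intervalIntegrable 0 1)).symm
  have hfx : f x - f y = ∫ t in (0:ℝ)..1, ⟪gradient f (y + t • d), d⟫ := by
    have : y + (1:ℝ) • d = x := by simp [hd]
    rw [← this]; simpa using heq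
  have hbound : ∀ t ∈ Set.Icc (0:ℝ) 1,
      ⟪gradient f (y + t • d), d⟫ ≤ ⟪gradient f y, d⟫ + L * t * ‖d‖ ^ 2 := by
    intro t ht
    have h1 : ⟪gradient f (y + t • d) - gradient f y, d⟫ ≤
        ‖gradient f (y + t • d) - gradient f y‖ * ‖d‖ := real_inner_le_norm _ _
    have h2 : ‖gradient f (y + t • d) - gradient f y‖ ≤ L * (t * ‖d‖) := by
      have := hLip (y + t • d) y
      simpa [norm_smul, abs_of_nonneg ht.1] using this
    have h3 : ‖gradient f (y + t • d) - gradient f y‖ * ‖d‖ ≤ L * (t * ‖d‖) * ‖d‖ :=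
      mul_le_mul_of_nonneg_right h2 (norm_nonneg d)
    have h4 : ⟪gradient f (y + t • d) - gradient f y, d⟫ =
        ⟪gradient f (y + t • d), d⟫ - ⟪gradient f y, d⟫ := inner_sub_left _ _ _
    nlinarith [sq_nonneg ‖d‖]
  have hint : (∫ t in (0:ℝ)..1, ⟪gradient f (y + t • d), d⟫) ≤
      ∫ t in (0:ℝ)..1, (⟪gradient f y, d⟫ + L * t * ‖d‖ ^ 2) := by
    apply intervalIntegral.integral_mono_on (by norm_num)
      (hcontI.intervalIntegrable 0 1)
      ((by continuity : Continuous fun t : ℝ => ⟪gradient f y, d⟫ + L * t * ‖d‖ ^ 2).intervalIntegrable 0 1)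
    exact hbound
  have hval : (∫ t in (0:ℝ)..1, (⟪gradient f y, d⟫ + L * t * ‖d‖ ^ 2)) =
      ⟪gradient f y, d⟫ + L / 2 * ‖d‖ ^ 2 := by
    have hfun : (fun t : ℝ => ⟪gradient f y, d⟫ + L * t * ‖d‖ ^ 2) =
        fun t : ℝ => ⟪gradient f y, d⟫ + (L * ‖d‖ ^ 2) * t := by funext t; ring
    have hI2 : IntervalIntegrable (fun t : ℝ => (L * ‖d‖ ^ 2) * t)
        MeasureTheory.volume 0 1 :=
      (by continuity : Continuous fun t : ℝ => (L * ‖d‖ ^ 2) * t).intervalIntegrable 0 1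
    rw [hfun, intervalIntegral.integral_add intervalIntegrable_const hI2,
      intervalIntegral.integral_const_mul, integral_id]
    simp
    ring
  linarith [hfx ▸ hint.trans_eq hval, hint.trans_eq hval, hfx]

end descent

/-- One-coordinate delayed proximal descent inequality in `ℝ^m`. -/
theorem stmt_1 (m : ℕ) (hm : 1 ≤ m)
    (f : EuclideanSpace ℝ (Fin m) → ℝ) (L : ℝ) (hL : 0 < L)
    (hf : Differentiable ℝ f)
    (hLip : ∀ u w : EuclideanSpace ℝ (Fin m),
      ‖gradient f u - gradient f w‖ ≤ L * ‖u - w‖)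
    (g : Fin m → ℝ → ℝ)
    (F : EuclideanSpace ℝ (Fin m) → ℝ)
    (hF : ∀ x, F x = f x + ∑ j, g j (x j))
    (η : ℝ) (hη : 0 < η)
    (y yhat xp : EuclideanSpace ℝ (Fin m)) (j : Fin m)
    (hcoord : ∀ i, i ≠ j → xp i = y i)
    (hmin : ∀ t : ℝ,
      gradient f yhat j * (xp j - y j) + (1 / (2 * η)) * (xp j - y j) ^ 2 + g j (xp j) ≤
        gradient f yhat j * (t - y j) + (1 / (2 * η)) * (t - y j) ^ 2 + g j t) :
    F xp ≤ F y + (xp j - y j) * (gradient f y j - gradient f yhat j) +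
      (L / 2 - 1 / (2 * η)) * ‖xp - y‖ ^ 2 := by
  set d : ℝ := xp j - y j with hdj
  -- coordinates of xp - y
  have hsub : ∀ i, (xp - y) i = xp i - y i := fun i => rfl
  have hzero : ∀ i, i ≠ j → (xp - y) i = 0 := by
    intro i hi; rw [hsub]; rw [hcoord i hi]; ring
  -- norm squared
  have hnorm : ‖xp - y‖ ^ 2 = d ^ 2 := by
    rw [← real_inner_self_eq_norm_sq]
    rw [PiLp.inner_apply]
    rw [Finset.sum_eq_single j]
    · simp [hsub, hdj, sq]
    · intro i _ hi; simp [hzero i hi]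
    · simp
  -- inner product with gradient
  have hinner : ⟪gradient f y, xp - y⟫ = gradient f y j * d := by
    rw [PiLp.inner_apply]
    rw [Finset.sum_eq_single j]
    · simp [hsub, hdj]; ring
    · intro i _ hi; simp [hzero i hi]
    · simp
  -- descent lemma
  have hdesc := descent_lemma f L hL hf hLip y xp
  -- sum of g
  have hg : ∑ i, g i (xp i) = g j (xp j) + (∑ i, g i (y i)) - g j (y j) := by
    have : ∑ i, (g i (xp i) - g i (y i)) = g j (xp j) - g j (y j) := by
      rw [Finset.sum_eq_single j]
      · intro i _ hi; rw [hcoord i hi]; ring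
      · simp
    have h2 := Finset.sum_sub_distrib (s := (Finset.univ : Finset (Fin m)))
      (f := fun i => g i (xp i)) (g := fun i => g i (y i))
    linarith [this, h2.symm ▸ this]
  -- min condition at t = y j
  have hminy := hmin (y j)
  simp only [sub_self, mul_zero, zero_pow, ne_eq, OfNat.ofNat_ne_zero,
    not_false_eq_true, zero_add, add_zero] at hminy
  rw [hF xp, hF y, hnorm]
  rw [hinner] at hdesc
  rw [hg]
  rw [hnorm] at hdesc
  nlinarith [hdesc, hminy]
end

section
/- Let H be a real inner product space, let f : H → ℝ be differentiable with gradient ∇f Lipschitz continuous with constant L > 0, let g : H → ℝ be any function, and set F = f + g. Fix η > 0, C > 0, and points y, ŷ ∈ H. Suppose x⁺ ∈ H minimizes u ↦ ⟨∇f(ŷ), u − y⟩ + (1/(2η))‖u − y‖² + g(u) over H. Then F(x⁺) ≤ F(y) + (L²/(2C))‖y − ŷ‖² − (1/(2η) − L/2 − C/2)·‖x⁺ − y‖². -/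
open scoped RealInnerProductSpace

lemma descent_aux {H : Type*} [NormedAddCommGroup H] [InnerProductSpace ℝ H] [CompleteSpace H]
    (f : H → ℝ) (L : ℝ) (hL : 0 ≤ L) (hf : Differentiable ℝ f)
    (hLip : ∀ u w : H, ‖gradient f u - gradient f w‖ ≤ L * ‖u - w‖) (a b : H) :
    f b ≤ f a + ⟪gradient f a, b - a⟫ + L / 2 * ‖b - a‖ ^ 2 := by
  set d := b - a with hd
  have hcont : Continuous (gradient f) := by
    refine (LipschitzWith.of_dist_le_mul (K := Real.toNNReal L) ?_).continuous
    intro u w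
    rw [dist_eq_norm, dist_eq_norm, Real.coe_toNNReal L hL]
    exact hLip u w
  have hφ : ∀ t : ℝ, HasDerivAt (fun t : ℝ => f (a + t • d))
      ⟪gradient f (a + t • d), d⟫ t := by
    intro t
    have h1 : HasDerivAt (fun t : ℝ => a + t • d) d t := by
      simpa using ((hasDerivAt_id t).smul_const d).const_add a
    have h2 := ((hf (a + t • d)).hasGradientAt).hasFDerivAt
    have := h2.comp_hasDerivAt t h1
    exact this
  have hcont2 : Continuous fun t : ℝ => ⟪gradient f (a + t • d), d⟫ := by
    exact (hcont.comp (by continuity)).inner continuous_const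
  have key : f b - f a = ∫ t in (0:ℝ)..1, ⟪gradient f (a + t • d), d⟫ := by
    have := intervalIntegral.integral_eq_sub_of_hasDerivAt
      (f := fun t : ℝ => f (a + t • d))
      (fun t _ => hφ t) (hcont2.intervalIntegrable 0 1)
    simpa [hd] using this.symm
  have hb : ∀ t ∈ Set.Icc (0:ℝ) 1,
      ⟪gradient f (a + t • d), d⟫ ≤ ⟪gradient f a, d⟫ + (L * ‖d‖ ^ 2) * t := by
    intro t ht
    have h1 : ⟪gradient f (a + t • d) - gradient f a, d⟫ ≤
        ‖gradient f (a + t • d) - gradient f a‖ * ‖d‖ := real_inner_le_norm _ _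
    have h2 := hLip (a + t • d) a
    have h3 : a + t • d - a = t • d := by abel
    rw [h3, norm_smul, Real.norm_eq_abs, abs_of_nonneg ht.1] at h2
    rw [inner_sub_left] at h1
    nlinarith [norm_nonneg d, mul_le_mul_of_nonneg_right h2 (norm_nonneg d)]
  have hmono : (∫ t in (0:ℝ)..1, ⟪gradient f (a + t • d), d⟫) ≤
      ∫ t in (0:ℝ)..1, (⟪gradient f a, d⟫ + (L * ‖d‖ ^ 2) * t) := by
    refine intervalIntegral.integral_mono_on (by norm_num)
      (hcont2.intervalIntegrable 0 1) ?_ hb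
    exact (Continuous.intervalIntegrable (by continuity) 0 1)
  have hval : (∫ t in (0:ℝ)..1, (⟪gradient f a, d⟫ + (L * ‖d‖ ^ 2) * t)) =
      ⟪gradient f a, d⟫ + L / 2 * ‖d‖ ^ 2 := by
    rw [intervalIntegral.integral_add (intervalIntegrable_const)
      (Continuous.intervalIntegrable (by continuity) 0 1)]
    rw [intervalIntegral.integral_const_mul, integral_id]
    simp
    ring
  rw [hval] at hmono
  linarith [key]

/-- One-step decrease of `F = f + g` for a proximal update with a stale gradient. -/
theorem stmt_2 {H : Type*} [NormedAddCommGroup H] [InnerProductSpace ℝ H] [CompleteSpace H]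
    (f : H → ℝ) (L : ℝ) (hL : 0 < L)
    (hf : Differentiable ℝ f)
    (hLip : ∀ u w : H, ‖gradient f u - gradient f w‖ ≤ L * ‖u - w‖)
    (g : H → ℝ) (F : H → ℝ) (hF : ∀ u, F u = f u + g u)
    (η C : ℝ) (hη : 0 < η) (hC : 0 < C)
    (y yhat xp : H)
    (hmin : ∀ u : H,
      ⟪gradient f yhat, xp - y⟫ + (1 / (2 * η)) * ‖xp - y‖ ^ 2 + g xp ≤
        ⟪gradient f yhat, u - y⟫ + (1 / (2 * η)) * ‖u - y‖ ^ 2 + g u) :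
    F xp ≤ F y + (L ^ 2 / (2 * C)) * ‖y - yhat‖ ^ 2 -
      (1 / (2 * η) - L / 2 - C / 2) * ‖xp - y‖ ^ 2 := by
  have hdesc := descent_aux f L hL.le hf hLip y xp
  have hm := hmin y
  simp only [sub_self, inner_zero_right, norm_zero] at hm
  have hm' : ⟪gradient f yhat, xp - y⟫ + (1 / (2 * η)) * ‖xp - y‖ ^ 2 + g xp ≤ g y := by
    simpa using hm
  have hyoung : ⟪gradient f y, xp - y⟫ - ⟪gradient f yhat, xp - y⟫ ≤
      L ^ 2 / (2 * C) * ‖y - yhat‖ ^ 2 + C / 2 * ‖xp - y‖ ^ 2 := by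
    have h1 : ⟪gradient f y - gradient f yhat, xp - y⟫ ≤
        ‖gradient f y - gradient f yhat‖ * ‖xp - y‖ := real_inner_le_norm _ _
    have h2 := mul_le_mul_of_nonneg_right (hLip y yhat) (norm_nonneg (xp - y))
    rw [inner_sub_left] at h1
    have h3 : L * ‖y - yhat‖ * ‖xp - y‖ ≤
        L ^ 2 / (2 * C) * ‖y - yhat‖ ^ 2 + C / 2 * ‖xp - y‖ ^ 2 := by
      have h5 : L ^ 2 / (2 * C) * ‖y - yhat‖ ^ 2 + C / 2 * ‖xp - y‖ ^ 2
          - L * ‖y - yhat‖ * ‖xp - y‖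
          = (L * ‖y - yhat‖ - C * ‖xp - y‖) ^ 2 / (2 * C) := by
        field_simp; ring
      nlinarith [div_nonneg (sq_nonneg (L * ‖y - yhat‖ - C * ‖xp - y‖)) (by positivity : (0:ℝ) ≤ 2 * C)]
    linarith
  rw [hF, hF]
  nlinarith [hdesc, hm', hyoung]
end

section
/- Let H be a real inner product space, let f : H → ℝ be differentiable with gradient ∇f Lipschitz continuous with constant L > 0, let g : H → ℝ, and set F = f + g. Fix η > 0, an integer τ ≥ 1, and β ≥ 0. Let y : ℕ → H be a sequence and define for k ≥ τ the Lyapunov weight ξ_k = (L/(2(1+β))) · Σ_{h=k−τ+1}^{k} (h − k + τ)·‖y^h − y^{h−1}‖². Fix k ≥ τ and suppose: (i) I ⊆ {k−τ, …, k−1} and ŷ = y^k − Σ_{h∈I} (y^{h+1} − y^h); (ii) x⁺ minimizes u ↦ ⟨∇f(ŷ), u − y^k⟩ + (1/(2η))‖u − y^k‖² + g(u) over H; (iii) ‖y^{k+1} − y^k‖ ≤ (1+β)·‖x⁺ − y^k‖. Then F(x⁺) + ξ_{k+1} ≤ F(y^k) + ξ_k − (1/(2η) − L/2 − L·τ·(1+β))·‖x⁺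 − y^k‖². -/
open scoped RealInnerProductSpace

lemma my_descent {H : Type*} [NormedAddCommGroup H] [InnerProductSpace ℝ H] [CompleteSpace H]
    (f : H → ℝ) (L : ℝ) (hL : 0 < L) (hf : Differentiable ℝ f)
    (hLip : ∀ u w : H, ‖gradient f u - gradient f w‖ ≤ L * ‖u - w‖) (x y : H) :
    f x ≤ f y + ⟪gradient f y, x - y⟫ + L / 2 * ‖x - y‖ ^ 2 := by
  set d := x - y with hd
  set ψ : ℝ → ℝ := fun t => f (y + t • d) - t * ⟪gradient f y, d⟫ - L / 2 * t ^ 2 * ‖d‖ ^ 2 with hψ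
  have hc : ∀ t : ℝ, HasDerivAt (fun t : ℝ => y + t • d) d t := fun t => by
    simpa using ((hasDerivAt_id t).smul_const d).const_add y
  have hφ : ∀ t : ℝ, HasDerivAt ψ
      (⟪gradient f (y + t • d), d⟫ - ⟪gradient f y, d⟫ - L * t * ‖d‖ ^ 2) t := by
    intro t
    have h1 : HasDerivAt (fun t : ℝ => f (y + t • d)) (⟪gradient f (y + t • d), d⟫) t := by
      have := ((hf (y + t • d)).hasGradientAt.hasFDerivAt).comp_hasDerivAt t (hc t)
      simpa [InnerProductSpace.toDual_apply_apply, Function.comp_def] using this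
    have h2 : HasDerivAt (fun t : ℝ => t * ⟪gradient f y, d⟫) ⟪gradient f y, d⟫ t := by
      simpa using (hasDerivAt_id t).mul_const (⟪gradient f y, d⟫)
    have h3 : HasDerivAt (fun t : ℝ => L / 2 * t ^ 2 * ‖d‖ ^ 2) (L * t * ‖d‖ ^ 2) t := by
      have := ((hasDerivAt_pow 2 t).const_mul (L / 2)).mul_const (‖d‖ ^ 2)
      refine this.congr_deriv ?_
      show L / 2 * (((2:ℕ):ℝ) * t ^ 1) * ‖d‖ ^ 2 = L * t * ‖d‖ ^ 2
      push_cast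
      ring
    have := (h1.sub h2).sub h3
    exact this
  have hanti : AntitoneOn ψ (Set.Icc (0:ℝ) 1) := by
    apply antitoneOn_of_deriv_nonpos (convex_Icc 0 1)
    · exact fun t _ => ((hφ t).continuousAt).continuousWithinAt
    · exact fun t _ => (hφ t).differentiableAt.differentiableWithinAt
    · intro t ht
      rw [interior_Icc] at ht
      rw [(hφ t).deriv]
      have h4 : ⟪gradient f (y + t • d) - gradient f y, d⟫ ≤
          ‖gradient f (y + t • d) - gradient f y‖ * ‖d‖ := real_inner_le_norm _ _
      have h5 : ‖gradient f (y + t • d) - gradient f y‖ ≤ L * ‖(y + t • d) - y‖ := hLip _ _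
      have h6 : ‖(y + t • d) - y‖ = t * ‖d‖ := by
        simp [norm_smul, abs_of_pos ht.1]
      rw [h6] at h5
      have h7 : ‖gradient f (y + t • d) - gradient f y‖ * ‖d‖ ≤ (L * (t * ‖d‖)) * ‖d‖ :=
        mul_le_mul_of_nonneg_right h5 (norm_nonneg _)
      rw [inner_sub_left] at h4
      nlinarith [norm_nonneg d]
  have hkey := hanti (Set.left_mem_Icc.2 zero_le_one) (Set.right_mem_Icc.2 zero_le_one)
      zero_le_one
  have h0 : ψ 0 = f y := by simp [hψ]
  have h1 : ψ 1 = f x - ⟪gradient f y, d⟫ - L / 2 * ‖d‖ ^ 2 := by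
    simp [hψ, hd]
  rw [h0, h1] at hkey
  linarith

/-- Deterministic single-realization sufficient-descent lemma for the Lyapunov
function `G = F + ξ` of AAPCD with delays bounded by `τ`. -/
theorem stmt_3 {H : Type*} [NormedAddCommGroup H] [InnerProductSpace ℝ H] [CompleteSpace H]
    (f : H → ℝ) (L : ℝ) (hL : 0 < L)
    (hf : Differentiable ℝ f)
    (hLip : ∀ u w : H, ‖gradient f u - gradient f w‖ ≤ L * ‖u - w‖)
    (g : H → ℝ) (F : H → ℝ) (hF : ∀ u, F u = f u + g u)
    (η β : ℝ) (hη : 0 < η) (hβ : 0 ≤ β)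
    (τ : ℕ) (hτ : 1 ≤ τ)
    (y : ℕ → H)
    (ξ : ℕ → ℝ)
    (hξ : ∀ n, τ ≤ n → ξ n = (L / (2 * (1 + β))) *
      ∑ h ∈ Finset.Icc (n - τ + 1) n, ((h : ℝ) - n + τ) * ‖y h - y (h - 1)‖ ^ 2)
    (k : ℕ) (hk : τ ≤ k)
    (I : Finset ℕ) (hI : ∀ h ∈ I, k - τ ≤ h ∧ h ≤ k - 1)
    (yhat : H) (hyhat : yhat = y k - ∑ h ∈ I, (y (h + 1) - y h))
    (xp : H)
    (hmin : ∀ u : H,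
      ⟪gradient f yhat, xp - y k⟫ + (1 / (2 * η)) * ‖xp - y k‖ ^ 2 + g xp ≤
        ⟪gradient f yhat, u - y k⟫ + (1 / (2 * η)) * ‖u - y k‖ ^ 2 + g u)
    (hmom : ‖y (k + 1) - y k‖ ≤ (1 + β) * ‖xp - y k‖) :
    F xp + ξ (k + 1) ≤ F (y k) + ξ k -
      (1 / (2 * η) - L / 2 - L * τ * (1 + β)) * ‖xp - y k‖ ^ 2 := by
  have hb : (0:ℝ) < 1 + β := by linarith
  have hk1 : 1 ≤ k := le_trans hτ hk
  set D := ‖xp - y k‖ with hD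
  have hD0 : (0:ℝ) ≤ D := norm_nonneg _
  set c : ℝ := L / (2 * (1 + β)) with hc
  have hc0 : 0 ≤ c := by positivity
  set a : ℕ → ℝ := fun h => ‖y h - y (h - 1)‖ ^ 2 with ha
  have ha0 : ∀ h, 0 ≤ a h := fun h => sq_nonneg _
  set m := k - τ + 1 with hm
  -- Step A : descent lemma
  have hA : f xp ≤ f (y k) + ⟪gradient f (y k), xp - y k⟫ + L / 2 * D ^ 2 :=
    my_descent f L hL hf hLip xp (y k)
  -- Step B : optimality at u = y k
  have hB : ⟪gradient f yhat, xp - y k⟫ + (1 / (2 * η)) * D ^ 2 + g xp ≤ g (y k) := by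
    have := hmin (y k)
    simpa using this
  -- Step C : cross term
  have hyd : ‖y k - yhat‖ ≤ ∑ h ∈ I, ‖y (h + 1) - y h‖ := by
    rw [hyhat]
    simpa using norm_sum_le I (fun h => y (h + 1) - y h)
  have hcardI : I.card ≤ τ := by
    have hsub : I ⊆ Finset.Icc (k - τ) (k - 1) := by
      intro h hh
      rw [Finset.mem_Icc]
      exact hI h hh
    calc I.card ≤ (Finset.Icc (k - τ) (k - 1)).card := Finset.card_le_card hsub
      _ = τ := by rw [Nat.card_Icc]; omega
  set SI : ℝ := ∑ h ∈ I, ‖y (h + 1) - y h‖ ^ 2 with hSI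
  have hcross : ⟪gradient f (y k), xp - y k⟫ - ⟪gradient f yhat, xp - y k⟫ ≤
      c * SI + L * τ * (1 + β) / 2 * D ^ 2 := by
    have h1 : ⟪gradient f (y k) - gradient f yhat, xp - y k⟫ ≤
        (L * ‖y k - yhat‖) * D := by
      refine le_trans (real_inner_le_norm _ _) ?_
      exact mul_le_mul_of_nonneg_right (hLip _ _) hD0
    have h2 : (L * ‖y k - yhat‖) * D ≤ ∑ h ∈ I, L * ‖y (h + 1) - y h‖ * D := by
      have : ∑ h ∈ I, L * ‖y (h + 1) - y h‖ * D = L * (∑ h ∈ I, ‖y (h + 1) - y h‖) * D := by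
        rw [Finset.mul_sum, Finset.sum_mul]
      rw [this]
      have := mul_le_mul_of_nonneg_left hyd hL.le
      exact mul_le_mul_of_nonneg_right this hD0
    have h3 : ∀ h ∈ I, L * ‖y (h + 1) - y h‖ * D ≤
        c * ‖y (h + 1) - y h‖ ^ 2 + L * (1 + β) / 2 * D ^ 2 := by
      intro h _
      have he : c * (2 * (1 + β)) = L := by
        rw [hc]
        field_simp
      nlinarith [mul_nonneg hL.le (sq_nonneg (‖y (h + 1) - y h‖ - (1 + β) * D)), hb,
        norm_nonneg (y (h + 1) - y h)]
    have h4 : ∑ h ∈ I, L * ‖y (h + 1) - y h‖ * D ≤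
        c * SI + (I.card : ℝ) * (L * (1 + β) / 2 * D ^ 2) := by
      calc ∑ h ∈ I, L * ‖y (h + 1) - y h‖ * D
          ≤ ∑ h ∈ I, (c * ‖y (h + 1) - y h‖ ^ 2 + L * (1 + β) / 2 * D ^ 2) :=
            Finset.sum_le_sum h3
        _ = c * SI + (I.card : ℝ) * (L * (1 + β) / 2 * D ^ 2) := by
            rw [Finset.sum_add_distrib, Finset.sum_const, Finset.mul_sum, nsmul_eq_mul]
    have h5 : (I.card : ℝ) * (L * (1 + β) / 2 * D ^ 2) ≤ (τ : ℝ) * (L * (1 + β) / 2 * D ^ 2) := by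
      apply mul_le_mul_of_nonneg_right _ (by positivity)
      exact_mod_cast hcardI
    rw [← inner_sub_left]
    calc ⟪gradient f (y k) - gradient f yhat, xp - y k⟫
        ≤ (L * ‖y k - yhat‖) * D := h1
      _ ≤ ∑ h ∈ I, L * ‖y (h + 1) - y h‖ * D := h2
      _ ≤ c * SI + (I.card : ℝ) * (L * (1 + β) / 2 * D ^ 2) := h4
      _ ≤ c * SI + (τ : ℝ) * (L * (1 + β) / 2 * D ^ 2) := by linarith
      _ = c * SI + L * τ * (1 + β) / 2 * D ^ 2 := by ring
  -- SI ≤ S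
  set S : ℝ := ∑ h ∈ Finset.Icc m k, a h with hS
  have hSIS : SI ≤ S := by
    have himg : SI = ∑ h ∈ I.image (· + 1), a h := by
      rw [Finset.sum_image (fun x _ y _ hxy => by omega)]
      apply Finset.sum_congr rfl
      intro h _
      simp [ha]
    have hsub : I.image (· + 1) ⊆ Finset.Icc m k := by
      intro x hx
      obtain ⟨h, hh, rfl⟩ := Finset.mem_image.1 hx
      have := hI h hh
      rw [Finset.mem_Icc]
      omega
    rw [himg, hS]
    exact Finset.sum_le_sum_of_subset_of_nonneg hsub (fun h _ _ => ha0 h)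
  -- ξ identity
  have hξid : ξ (k + 1) = ξ k + c * (τ * a (k + 1)) - c * S := by
    have hξk : ξ k = c * ∑ h ∈ Finset.Icc m k, ((h : ℝ) - (k : ℝ) + (τ : ℝ)) * a h := hξ k hk
    have hξk1 : ξ (k + 1) = c * ∑ h ∈ Finset.Icc (m + 1) (k + 1),
        ((h : ℝ) - ((k + 1 : ℕ) : ℝ) + (τ : ℝ)) * a h := by
      have h := hξ (k + 1) (le_trans hk (Nat.le_succ k))
      have hup : k + 1 - τ + 1 = m + 1 := by omega
      rw [hup] at h
      exact h
    have hins : Finset.Icc m k = insert m (Finset.Icc (m + 1) k) := by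
      ext x
      simp only [Finset.mem_Icc, Finset.mem_insert]
      omega
    have hnot : m ∉ Finset.Icc (m + 1) k := by simp
    have hsum1 : ∑ h ∈ Finset.Icc (m + 1) (k + 1), ((h : ℝ) - ((k + 1 : ℕ) : ℝ) + τ) * a h =
        (∑ h ∈ Finset.Icc (m + 1) k, ((h : ℝ) - ((k + 1 : ℕ) : ℝ) + τ) * a h) +
          (τ : ℝ) * a (k + 1) := by
      rw [Finset.sum_Icc_succ_top (by omega : m + 1 ≤ k + 1), sub_self, zero_add]
    have hcoeffm : ((m : ℝ) - k + τ) * a m - a m = 0 := by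
      have : (m : ℝ) = (k : ℝ) - τ + 1 := by
        rw [hm]
        push_cast [Nat.cast_sub hk]
        ring
      rw [this]
      ring
    have hsum2 : (∑ h ∈ Finset.Icc m k, ((h : ℝ) - k + τ) * a h) - S =
        ∑ h ∈ Finset.Icc (m + 1) k, ((h : ℝ) - ((k + 1 : ℕ) : ℝ) + τ) * a h := by
      rw [hS, ← Finset.sum_sub_distrib, hins, Finset.sum_insert hnot, hcoeffm, zero_add]
      apply Finset.sum_congr rfl
      intro h _
      push_cast
      ring
    rw [hξk1, hξk, hsum1, ← hsum2]
    ring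
  -- bound the new term
  have hE : c * (τ * a (k + 1)) ≤ L * τ * (1 + β) / 2 * D ^ 2 := by
    have hak : a (k + 1) = ‖y (k + 1) - y k‖ ^ 2 := by simp [ha]
    have hsq : ‖y (k + 1) - y k‖ ^ 2 ≤ ((1 + β) * D) ^ 2 :=
      pow_le_pow_left₀ (norm_nonneg _) hmom 2
    have h1 : c * (τ * a (k + 1)) ≤ c * (τ * ((1 + β) * D) ^ 2) := by
      apply mul_le_mul_of_nonneg_left _ hc0
      apply mul_le_mul_of_nonneg_left _ (Nat.cast_nonneg τ)
      rw [hak]; exact hsq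
    have h2 : c * (τ * ((1 + β) * D) ^ 2) = L * τ * (1 + β) / 2 * D ^ 2 := by
      rw [hc]
      field_simp
    linarith
  have hcS : c * SI ≤ c * S := mul_le_mul_of_nonneg_left hSIS hc0
  rw [hF, hF, hξid]
  linarith
end

section
/- Let H be a real inner product space, let f : H → ℝ be differentiable with gradient ∇f Lipschitz continuous with constant L > 0, let g : H → ℝ, and set F = f + g with inf_{u∈H} F(u) > −∞. Fix an integer τ ≥ 1, β ≥ 0, and a stepsize 0 < η < 1/(L + 2Lτ(1+β)). Let x, y : ℕ → H be sequences such that for every k ≥ τ: (i) there is I(k) ⊆ {k−τ, …, k−1} with ŷ^k = y^k − Σ_{h∈I(k)} (y^{h+1} − y^h); (ii) x^{k+1} minimizes u ↦ ⟨∇f(ŷ^k), u − y^k⟩ + (1/(2η))‖u − y^k‖² + g(u) over H; (iii) ‖y^{k+1} − y^k‖ ≤ (1+β)·‖x^{k+1} − y^k‖; and (iv) F(y^{k+1}) ≤ F(x^{k+1}). Then Σ_{k≥τ} ‖x^{k+1} − y^k‖² < ∞, ‖y^{k+1} − y^k‖ → 0 as k → ∞, ξ_k := (L/(2(1+β)))·Σ_{h=k−τ+1}^{k}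 (h−k+τ)‖y^h − y^{h−1}‖² → 0, and the sequence F(y^k) converges. -/
open scoped RealInnerProductSpace
open Filter

lemma aapcd_descent {H : Type*} [NormedAddCommGroup H] [InnerProductSpace ℝ H]
    [CompleteSpace H] (f : H → ℝ) (L : ℝ) (hf : Differentiable ℝ f)
    (hLip : ∀ u w : H, ‖gradient f u - gradient f w‖ ≤ L * ‖u - w‖) (v w : H) :
    f w ≤ f v + ⟪gradient f v, w - v⟫ + L / 2 * ‖w - v‖ ^ 2 := by
  set d := w - v with hd
  set φ : ℝ → ℝ := fun t => f (v + t • d) - t * ⟪gradient f v, d⟫ - L / 2 * t ^ 2 * ‖d‖ ^ 2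
    with hφdef
  have hderiv : ∀ t : ℝ, HasDerivAt φ
      (⟪gradient f (v + t • d), d⟫ - ⟪gradient f v, d⟫ - L * t * ‖d‖ ^ 2) t := by
    intro t
    have hc : HasDerivAt (fun t : ℝ => v + t • d) d t := by
      simpa using ((hasDerivAt_id t).smul_const d).const_add v
    have hf' : HasDerivAt (fun t : ℝ => f (v + t • d)) (⟪gradient f (v + t • d), d⟫) t := by
      have h1 := ((hf (v + t • d)).hasGradientAt.hasFDerivAt).comp_hasDerivAt t hc
      simp [Function.comp, InnerProductSpace.toDual_apply_apply] at h1 ⊢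
      exact h1
    have h1 : HasDerivAt (fun t : ℝ => t * ⟪gradient f v, d⟫) (⟪gradient f v, d⟫) t := by
      simpa using (hasDerivAt_id t).mul_const (⟪gradient f v, d⟫)
    have h2 : HasDerivAt (fun t : ℝ => L / 2 * t ^ 2 * ‖d‖ ^ 2) (L * t * ‖d‖ ^ 2) t := by
      have h3 := ((hasDerivAt_pow 2 t).const_mul (L / 2)).mul_const (‖d‖ ^ 2)
      refine h3.congr_deriv ?_
      push_cast
      ring
    exact (hf'.sub h1).sub h2
  have hcont : Continuous φ := by
    have hdiff : Differentiable ℝ φ := fun t => (hderiv t).differentiableAt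
    exact hdiff.continuous
  have hanti : AntitoneOn φ (Set.Icc 0 1) := by
    apply antitoneOn_of_deriv_nonpos (convex_Icc 0 1) hcont.continuousOn
    · intro t _
      exact (hderiv t).differentiableAt.differentiableWithinAt
    · intro t ht
      rw [interior_Icc] at ht
      rw [(hderiv t).deriv]
      have key : ⟪gradient f (v + t • d) - gradient f v, d⟫ ≤ L * t * ‖d‖ ^ 2 := by
        calc ⟪gradient f (v + t • d) - gradient f v, d⟫
            ≤ ‖gradient f (v + t • d) - gradient f v‖ * ‖d‖ := real_inner_le_norm _ _
          _ ≤ (L * ‖(v + t • d) - v‖) * ‖d‖ :=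
              mul_le_mul_of_nonneg_right (hLip _ _) (norm_nonneg d)
          _ = L * t * ‖d‖ ^ 2 := by
              have h4 : ‖(v + t • d) - v‖ = |t| * ‖d‖ := by
                simp [norm_smul, Real.norm_eq_abs]
              rw [h4, abs_of_pos ht.1]
              ring
      rw [inner_sub_left] at key
      linarith
  have h01 : φ 1 ≤ φ 0 := hanti (by norm_num) (by norm_num) (by norm_num)
  have h0 : φ 0 = f v := by simp [hφdef]
  have h1 : φ 1 = f w - ⟪gradient f v, d⟫ - L / 2 * ‖d‖ ^ 2 := by
    simp [hφdef, hd]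
  rw [h0, h1] at h01
  linarith

set_option maxHeartbeats 2000000 in
/-- Deterministic convergence properties of the AAPCD iterates with bounded delays
(parts 1–2 of Theorem 1, deterministic form). -/
theorem stmt_4 {H : Type*} [NormedAddCommGroup H] [InnerProductSpace ℝ H] [CompleteSpace H]
    (f : H → ℝ) (L : ℝ) (hL : 0 < L)
    (hf : Differentiable ℝ f)
    (hLip : ∀ u w : H, ‖gradient f u - gradient f w‖ ≤ L * ‖u - w‖)
    (g : H → ℝ) (F : H → ℝ) (hF : ∀ u, F u = f u + g u)
    (hbdd : ∃ B : ℝ, ∀ u : H, B ≤ F u)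
    (τ : ℕ) (hτ : 1 ≤ τ) (β : ℝ) (hβ : 0 ≤ β)
    (η : ℝ) (hη0 : 0 < η) (hη1 : η < 1 / (L + 2 * L * τ * (1 + β)))
    (x y : ℕ → H)
    (hstep : ∀ k, τ ≤ k → ∃ I : Finset ℕ, (∀ h ∈ I, k - τ ≤ h ∧ h ≤ k - 1) ∧
      ∀ u : H,
        ⟪gradient f (y k - ∑ h ∈ I, (y (h + 1) - y h)), x (k + 1) - y k⟫ +
            (1 / (2 * η)) * ‖x (k + 1) - y k‖ ^ 2 + g (x (k + 1)) ≤
          ⟪gradient f (y k - ∑ h ∈ I, (y (h + 1) - y h)), u - y k⟫ +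
            (1 / (2 * η)) * ‖u - y k‖ ^ 2 + g u)
    (hmom : ∀ k, τ ≤ k → ‖y (k + 1) - y k‖ ≤ (1 + β) * ‖x (k + 1) - y k‖)
    (haccept : ∀ k, τ ≤ k → F (y (k + 1)) ≤ F (x (k + 1))) :
    Summable (fun k : ℕ => ‖x (k + τ + 1) - y (k + τ)‖ ^ 2) ∧
    Tendsto (fun k : ℕ => ‖y (k + 1) - y k‖) atTop (nhds 0) ∧
    Tendsto (fun k : ℕ => (L / (2 * (1 + β))) *
      ∑ h ∈ Finset.Icc (k - τ + 1) k, ((h : ℝ) - k + τ) * ‖y h - y (h - 1)‖ ^ 2)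
      atTop (nhds 0) ∧
    ∃ Fstar : ℝ, Tendsto (fun k : ℕ => F (y k)) atTop (nhds Fstar) := by
  obtain ⟨B, hB⟩ := hbdd
  have hβ1 : (0:ℝ) < 1 + β := by linarith
  set a : ℕ → ℝ := fun h => ‖y h - y (h - 1)‖ ^ 2 with ha_def
  set D : ℕ → ℝ := fun k => ‖x (k + 1) - y k‖ ^ 2 with hD_def
  set c : ℝ := L / (2 * (1 + β)) with hc_def
  have hc0 : 0 < c := by positivity
  set S : ℕ → ℝ := fun k => ∑ j ∈ Finset.range τ, a (k - j) with hS_def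
  set ξ : ℕ → ℝ := fun k => ∑ j ∈ Finset.range τ, ((τ : ℝ) - j) * a (k - j) with hξ_def
  set Φ : ℕ → ℝ := fun k => F (y k) + c * ξ k with hΦ_def
  set δ : ℝ := 1 / (2 * η) - L / 2 - L * τ * (1 + β) with hδ_def
  clear_value a D S ξ Φ δ
  have ha_nonneg : ∀ h, 0 ≤ a h := fun h => by rw [ha_def]; exact sq_nonneg _
  have hD_nonneg : ∀ k, 0 ≤ D k := fun k => by rw [hD_def]; exact sq_nonneg _
  have hτR : (1:ℝ) ≤ τ := by exact_mod_cast hτ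
  have hτ0 : (0:ℝ) < τ := by linarith
  have hδ0 : 0 < δ := by
    have hM : (0:ℝ) < L + 2 * L * τ * (1 + β) := by positivity
    have hηM : η * (L + 2 * L * τ * (1 + β)) < 1 := (lt_div_iff₀ hM).mp hη1
    have h2 : L / 2 + L * τ * (1 + β) < 1 / (2 * η) := by
      rw [lt_div_iff₀ (by positivity)]
      nlinarith
    rw [hδ_def]
    linarith
  have hξ_nonneg : ∀ k, 0 ≤ ξ k := by
    intro k
    rw [hξ_def]
    apply Finset.sum_nonneg
    intro j hj
    have hjτ : (j:ℝ) ≤ τ := by exact_mod_cast (Finset.mem_range.mp hj).le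
    exact mul_nonneg (by linarith) (ha_nonneg _)
  have hS_nonneg : ∀ k, 0 ≤ S k := fun k => by
    rw [hS_def]; exact Finset.sum_nonneg fun j _ => ha_nonneg _
  -- the ξ recurrence
  have hξ_rec : ∀ k, ξ (k + 1) = (τ:ℝ) * a (k + 1) + ξ k - S k := by
    intro k
    obtain ⟨m, hm⟩ : ∃ m, τ = m + 1 := ⟨τ - 1, by omega⟩
    simp only [hξ_def, hS_def, hm]
    rw [Finset.sum_range_succ']
    have e1 : ∀ j ∈ Finset.range m,
        ((↑(m + 1):ℝ) - ↑(j + 1)) * a (k + 1 - (j + 1)) = ((m:ℝ) - j) * a (k - j) := by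
      intro j _
      have h1 : k + 1 - (j + 1) = k - j := by omega
      rw [h1]
      push_cast
      ring
    rw [Finset.sum_congr rfl e1]
    have e2 : ∑ j ∈ Finset.range (m + 1), ((↑(m + 1):ℝ) - j) * a (k - j)
        - ∑ j ∈ Finset.range (m + 1), a (k - j)
        = ∑ j ∈ Finset.range m, ((m:ℝ) - j) * a (k - j) := by
      rw [← Finset.sum_sub_distrib, Finset.sum_range_succ]
      have e3 : ∀ j ∈ Finset.range m,
          ((↑(m + 1):ℝ) - j) * a (k - j) - a (k - j) = ((m:ℝ) - j) * a (k - j) := by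
        intro j _
        push_cast
        ring
      rw [Finset.sum_congr rfl e3]
      have : ((↑(m + 1):ℝ) - m) * a (k - m) - a (k - m) = 0 := by push_cast; ring
      rw [this, add_zero]
    have h0 : ((↑(m + 1):ℝ) - (0:ℕ)) * a (k + 1 - 0) = (↑(m + 1):ℝ) * a (k + 1) := by
      norm_num
    rw [h0]
    linarith [e2]
  -- the key decrease
  have hdec : ∀ k, τ ≤ k → Φ (k + 1) + δ * D k ≤ Φ k := by
    intro k hk
    obtain ⟨I, hI, hmin⟩ := hstep k hk
    set d : H := x (k + 1) - y k with hd
    set Δ : H := ∑ h ∈ I, (y (h + 1) - y h) with hΔ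
    have hDk : D k = ‖d‖ ^ 2 := by simp [hD_def, hd]
    have h1 : ⟪gradient f (y k - Δ), d⟫ + 1 / (2 * η) * ‖d‖ ^ 2 + g (x (k + 1)) ≤ g (y k) := by
      have h := hmin (y k)
      simpa using h
    have h2 := aapcd_descent f L hf hLip (y k) (x (k + 1))
    have h3 : ⟪gradient f (y k), d⟫ - ⟪gradient f (y k - Δ), d⟫ ≤ L * ‖Δ‖ * ‖d‖ := by
      have ha1 := real_inner_le_norm (gradient f (y k) - gradient f (y k - Δ)) d
      rw [inner_sub_left] at ha1
      have ha2 := hLip (y k) (y k - Δ)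
      have ha3 : y k - (y k - Δ) = Δ := by abel
      rw [ha3] at ha2
      nlinarith [norm_nonneg d]
    have h5 : ‖Δ‖ ≤ ∑ h ∈ I, ‖y (h + 1) - y h‖ := norm_sum_le I _
    -- reindex into range τ
    have hIb : ∀ h ∈ I, k - τ ≤ h ∧ h ≤ k - 1 := hI
    have himg : ∀ h ∈ I, k - 1 - h ∈ Finset.range τ := by
      intro h hh
      obtain ⟨hb1, hb2⟩ := hIb h hh
      simp only [Finset.mem_range]
      omega
    have hinj : Set.InjOn (fun h => k - 1 - h) I := by
      intro h1 hh1 h2 hh2 heq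
      obtain ⟨_, hb1⟩ := hIb h1 hh1
      obtain ⟨_, hb2⟩ := hIb h2 hh2
      simp only at heq
      omega
    have hmatch : ∀ h ∈ I, ‖y (h + 1) - y h‖ ^ 2 = a (k - (k - 1 - h)) := by
      intro h hh
      obtain ⟨hb1, hb2⟩ := hIb h hh
      have e1 : k - (k - 1 - h) = h + 1 := by omega
      rw [e1]
      simp [ha_def]
    have h6 : ∑ h ∈ I, ‖y (h + 1) - y h‖ ^ 2 ≤ S k := by
      calc ∑ h ∈ I, ‖y (h + 1) - y h‖ ^ 2 = ∑ h ∈ I, a (k - (k - 1 - h)) :=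
            Finset.sum_congr rfl hmatch
        _ = ∑ j ∈ I.image (fun h => k - 1 - h), a (k - j) := by
            rw [Finset.sum_image (fun p hp q hq hpq => hinj hp hq hpq)]
        _ ≤ S k := by
            rw [hS_def]
            apply Finset.sum_le_sum_of_subset_of_nonneg
            · intro j hj
              obtain ⟨h, hh, rfl⟩ := Finset.mem_image.mp hj
              exact himg h hh
            · intro j _ _
              exact ha_nonneg _
    have hcard : (I.card : ℝ) ≤ τ := by
      have e1 : I.card = (I.image (fun h => k - 1 - h)).card :=
        (Finset.card_image_of_injOn hinj).symm
      have hsub : I.image (fun h => k - 1 - h) ⊆ Finset.range τ := by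
        intro j hj
        obtain ⟨h, hh, rfl⟩ := Finset.mem_image.mp hj
        exact himg h hh
      have e2 : (I.image (fun h => k - 1 - h)).card ≤ τ := by
        simpa using Finset.card_le_card hsub
      exact_mod_cast e1 ▸ e2
    have h8 : L * ‖Δ‖ * ‖d‖ ≤ c * S k + (τ:ℝ) * (L * (1 + β) / 2) * ‖d‖ ^ 2 := by
      calc L * ‖Δ‖ * ‖d‖ ≤ L * (∑ h ∈ I, ‖y (h + 1) - y h‖) * ‖d‖ :=
            mul_le_mul_of_nonneg_right (mul_le_mul_of_nonneg_left h5 hL.le) (norm_nonneg d)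
        _ = ∑ h ∈ I, L * ‖y (h + 1) - y h‖ * ‖d‖ := by
            rw [Finset.mul_sum, Finset.sum_mul]
        _ ≤ ∑ h ∈ I, (c * ‖y (h + 1) - y h‖ ^ 2 + L * (1 + β) / 2 * ‖d‖ ^ 2) := by
            apply Finset.sum_le_sum
            intro h _
            have key : c * (‖y (h + 1) - y h‖ - (1 + β) * ‖d‖) ^ 2
                = c * ‖y (h + 1) - y h‖ ^ 2 + L * (1 + β) / 2 * ‖d‖ ^ 2
                  - L * ‖y (h + 1) - y h‖ * ‖d‖ := by
              rw [hc_def]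
              field_simp
              ring
            linarith [mul_nonneg hc0.le (sq_nonneg (‖y (h + 1) - y h‖ - (1 + β) * ‖d‖)), key]
        _ = c * (∑ h ∈ I, ‖y (h + 1) - y h‖ ^ 2) + I.card * (L * (1 + β) / 2 * ‖d‖ ^ 2) := by
            rw [Finset.sum_add_distrib, ← Finset.mul_sum, Finset.sum_const, nsmul_eq_mul]
        _ ≤ c * S k + (τ:ℝ) * (L * (1 + β) / 2) * ‖d‖ ^ 2 := by
            have hq : (0:ℝ) ≤ L * (1 + β) / 2 * ‖d‖ ^ 2 := by positivity
            have hp1 := mul_le_mul_of_nonneg_left h6 hc0.le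
            have hp2 := mul_le_mul_of_nonneg_right hcard hq
            linarith
    have h9 : F (x (k + 1)) ≤ F (y k) + c * S k
        + ((τ:ℝ) * (L * (1 + β) / 2) + L / 2 - 1 / (2 * η)) * ‖d‖ ^ 2 := by
      rw [hF (x (k + 1)), hF (y k)]
      rw [← hd] at h2
      linarith [h1, h2, h3, h8]
    have h10 : a (k + 1) ≤ (1 + β) ^ 2 * ‖d‖ ^ 2 := by
      have hm := hmom k hk
      have ha1 : a (k + 1) = ‖y (k + 1) - y k‖ ^ 2 := by simp [ha_def]
      rw [← hd] at hm
      calc a (k + 1) = ‖y (k + 1) - y k‖ ^ 2 := ha1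
        _ ≤ ((1 + β) * ‖d‖) ^ 2 := pow_le_pow_left₀ (norm_nonneg _) hm 2
        _ = (1 + β) ^ 2 * ‖d‖ ^ 2 := mul_pow _ _ _
    have h11 : c * (1 + β) ^ 2 = L * (1 + β) / 2 := by
      rw [hc_def]
      field_simp
    have hacc := haccept k hk
    have h12 : c * ((τ:ℝ) * a (k + 1)) ≤ (τ:ℝ) * (L * (1 + β) / 2) * ‖d‖ ^ 2 := by
      have hp1 : c * (τ:ℝ) * a (k + 1) ≤ c * (τ:ℝ) * ((1 + β) ^ 2 * ‖d‖ ^ 2) :=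
        mul_le_mul_of_nonneg_left h10 (by positivity)
      have hp2 : c * (τ:ℝ) * ((1 + β) ^ 2 * ‖d‖ ^ 2) = (τ:ℝ) * (L * (1 + β) / 2) * ‖d‖ ^ 2 := by
        rw [← h11]
        ring
      linarith
    have hδe : (τ:ℝ) * (L * (1 + β) / 2) + ((τ:ℝ) * (L * (1 + β) / 2) + L / 2 - 1 / (2 * η))
        = -δ := by
      rw [hδ_def]
      ring
    have hδe2 : ((τ:ℝ) * (L * (1 + β) / 2) + ((τ:ℝ) * (L * (1 + β) / 2) + L / 2 - 1 / (2 * η)))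
        * ‖d‖ ^ 2 = -δ * ‖d‖ ^ 2 := by rw [hδe]
    simp only [hΦ_def]
    rw [hξ_rec k, hDk]
    linarith [h9, h12, hacc, hδe2]
  -- bounded below
  have hΦ_lb : ∀ k, B ≤ Φ k := by
    intro k
    have h1 := hB (y k)
    have h2 := mul_nonneg hc0.le (hξ_nonneg k)
    simp only [hΦ_def]
    linarith
  -- telescoping
  have htel : ∀ n : ℕ, δ * ∑ k ∈ Finset.range n, D (k + τ) ≤ Φ τ - Φ (n + τ) := by
    intro n
    induction n with
    | zero => simp
    | succ n ih =>
        rw [Finset.sum_range_succ, mul_add]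
        have h1 := hdec (n + τ) (Nat.le_add_left τ n)
        have e : n + 1 + τ = n + τ + 1 := by omega
        rw [e]
        linarith
  have hsum : Summable (fun k : ℕ => D (k + τ)) := by
    have hbound : ∀ n, ∑ k ∈ Finset.range n, D (k + τ) ≤ (Φ τ - B) / δ := by
      intro n
      rw [le_div_iff₀ hδ0]
      have h1 := htel n
      have h2 := hΦ_lb (n + τ)
      linarith
    exact summable_of_sum_range_le (fun n => hD_nonneg _) hbound
  have goal1 : Summable (fun k : ℕ => ‖x (k + τ + 1) - y (k + τ)‖ ^ 2) := by
    have e : (fun k : ℕ => ‖x (k + τ + 1) - y (k + τ)‖ ^ 2) = fun k => D (k + τ) := by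
      funext k
      rw [hD_def]
    rw [e]
    exact hsum
  -- limits
  have hD0 : Tendsto D atTop (nhds 0) :=
    (tendsto_add_atTop_iff_nat τ).mp hsum.tendsto_atTop_zero
  have hnorm0 : Tendsto (fun k => ‖x (k + 1) - y k‖) atTop (nhds 0) := by
    have h1 : Tendsto (fun k => Real.sqrt (D k)) atTop (nhds (Real.sqrt 0)) :=
      (Real.continuous_sqrt.tendsto 0).comp hD0
    rw [Real.sqrt_zero] at h1
    refine h1.congr fun k => ?_
    rw [hD_def]
    exact Real.sqrt_sq (norm_nonneg _)
  have goal2 : Tendsto (fun k : ℕ => ‖y (k + 1) - y k‖) atTop (nhds 0) := by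
    have hlim : Tendsto (fun k => (1 + β) * ‖x (k + 1) - y k‖) atTop (nhds 0) := by
      simpa using hnorm0.const_mul (1 + β)
    refine squeeze_zero' (Eventually.of_forall fun k => norm_nonneg _) ?_ hlim
    filter_upwards [eventually_ge_atTop τ] with k hk using hmom k hk
  have ha0 : Tendsto a atTop (nhds 0) := by
    rw [← tendsto_add_atTop_iff_nat 1]
    have e : (fun k => a (k + 1)) = fun k => ‖y (k + 1) - y k‖ ^ 2 := by
      funext k
      simp [ha_def]
    rw [e]
    simpa using goal2.pow 2
  have hξ0 : Tendsto ξ atTop (nhds 0) := by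
    rw [hξ_def]
    have h1 : Tendsto (fun k => ∑ j ∈ Finset.range τ, ((τ:ℝ) - j) * a (k - j)) atTop
        (nhds (∑ j ∈ Finset.range τ, ((τ:ℝ) - j) * 0)) := by
      apply tendsto_finset_sum
      intro j _
      exact (ha0.comp (tendsto_sub_atTop_nat j)).const_mul _
    simpa using h1
  have goal3 : Tendsto (fun k : ℕ => c *
      ∑ h ∈ Finset.Icc (k - τ + 1) k, ((h : ℝ) - k + τ) * ‖y h - y (h - 1)‖ ^ 2)
      atTop (nhds 0) := by
    have egoal : (fun k : ℕ => c *
        ∑ h ∈ Finset.Icc (k - τ + 1) k, ((h : ℝ) - k + τ) * ‖y h - y (h - 1)‖ ^ 2)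
        = fun k : ℕ => c * ∑ h ∈ Finset.Icc (k - τ + 1) k, ((h : ℝ) - k + τ) * a h := by
      simp only [ha_def]
    rw [egoal]
    have hIcc : ∀ k : ℕ, τ ≤ k →
        (∑ h ∈ Finset.Icc (k - τ + 1) k, ((h : ℝ) - k + τ) * a h) = ξ k := by
      intro k hk
      rw [hξ_def]
      refine Finset.sum_nbij' (fun h => k - h) (fun j => k - j) ?_ ?_ ?_ ?_ ?_
      · intro h hh
        simp only [Finset.mem_Icc] at hh
        simp only [Finset.mem_range]
        omega
      · intro j hj
        simp only [Finset.mem_range] at hj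
        simp only [Finset.mem_Icc]
        omega
      · intro h hh
        simp only [Finset.mem_Icc] at hh
        show k - (k - h) = h
        omega
      · intro j hj
        simp only [Finset.mem_range] at hj
        show k - (k - j) = j
        omega
      · intro h hh
        simp only [Finset.mem_Icc] at hh
        have e1 : k - (k - h) = h := by omega
        rw [e1]
        have e2 : ((k - h : ℕ):ℝ) = (k:ℝ) - h := by
          have : h ≤ k := hh.2
          push_cast [this]
          ring
        rw [e2]
        ring
    have hlim : Tendsto (fun k => c * ξ k) atTop (nhds 0) := by
      simpa using hξ0.const_mul c
    apply Tendsto.congr' ?_ hlim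
    filter_upwards [eventually_ge_atTop τ] with k hk
    rw [hIcc k hk]
  have goal4 : ∃ Fstar : ℝ, Tendsto (fun k : ℕ => F (y k)) atTop (nhds Fstar) := by
    have hanti : Antitone (fun n => Φ (n + τ)) := by
      apply antitone_nat_of_succ_le
      intro n
      have h1 := hdec (n + τ) (Nat.le_add_left τ n)
      have h2 := mul_nonneg hδ0.le (hD_nonneg (n + τ))
      have e : n + 1 + τ = n + τ + 1 := by omega
      rw [e]
      linarith
    have hbdd' : BddBelow (Set.range fun n => Φ (n + τ)) :=
      ⟨B, by rintro _ ⟨n, rfl⟩; exact hΦ_lb _⟩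
    have hΦlim : Tendsto (fun n => Φ (n + τ)) atTop (nhds (⨅ n, Φ (n + τ))) :=
      tendsto_atTop_ciInf hanti hbdd'
    have hΦlim' : Tendsto Φ atTop (nhds (⨅ n, Φ (n + τ))) :=
      (tendsto_add_atTop_iff_nat τ).mp hΦlim
    have h3 : (fun k => Φ k - c * ξ k) = fun k => F (y k) := by
      funext k
      simp only [hΦ_def]
      ring
    refine ⟨⨅ n, Φ (n + τ), ?_⟩
    rw [← h3]
    simpa using hΦlim'.sub (hξ0.const_mul c)
  exact ⟨goal1, goal2, goal3, goal4⟩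
end

section
/- Let θ ∈ (0, 1/2), K > 0, R > 1, and let a, b be real numbers with 0 < a ≤ b. Suppose 1 ≤ K·a^{2θ−2}·(b − a). Then min( 1/(K·R), b^{2θ−1}·(R^{(2θ−1)/(2θ−2)} − 1)/(1 − 2θ) ) ≤ (a^{2θ−1} − b^{2θ−1})/(1 − 2θ). -/
/-- Bernoulli-type inequality for exponents in `(-1, 0)` and base in `(0, 1]`. -/
lemma bern_neg {x p : ℝ} (hx0 : 0 < x) (hx1 : x ≤ 1) (hp : -1 < p) (hp0 : p < 0) :
    1 + p * (x - 1) ≤ x ^ p := by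
  have ht0 : 0 ≤ p * (x - 1) := by nlinarith
  have ht1 : p * (x - 1) < 1 := by nlinarith
  have h1 : x ^ (-p) ≤ 1 - p * (x - 1) := by
    have := Real.geom_mean_le_arith_mean2_weighted (w₁ := -p) (w₂ := 1 + p) (p₁ := x) (p₂ := 1)
      (by linarith) (by linarith) hx0.le zero_le_one (by ring)
    simpa [Real.one_rpow] using this.trans_eq (by ring)
  have hxp : x ^ p = (x ^ (-p))⁻¹ := by
    rw [Real.rpow_neg hx0.le, inv_inv]
  have hpos : 0 < x ^ (-p) := Real.rpow_pos_of_pos hx0 _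
  have hmul : (1 + p * (x - 1)) * x ^ (-p) ≤ 1 := by nlinarith
  rw [hxp]
  calc 1 + p * (x - 1) = (1 + p * (x - 1)) * x ^ (-p) / x ^ (-p) := by
        field_simp
    _ ≤ 1 / x ^ (-p) := by
        exact (div_le_div_iff_of_pos_right hpos).2 hmul
    _ = (x ^ (-p))⁻¹ := one_div _

/-- Per-step estimate in the KL case `θ ∈ (0, 1/2)` obtained by distinguishing
`h(a)/h(b) ≤ R` and `h(a)/h(b) ≥ R` for `h(s) = s^{2θ−2}`. -/
theorem stmt_14 (θ K R a b : ℝ) (hθ0 : 0 < θ) (hθ1 : θ < 1 / 2)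
    (hK : 0 < K) (hR : 1 < R) (ha : 0 < a) (hab : a ≤ b)
    (hKL : 1 ≤ K * a ^ (2 * θ - 2) * (b - a)) :
    min (1 / (K * R)) (b ^ (2 * θ - 1) * (R ^ ((2 * θ - 1) / (2 * θ - 2)) - 1) / (1 - 2 * θ)) ≤
      (a ^ (2 * θ - 1) - b ^ (2 * θ - 1)) / (1 - 2 * θ) := by
  have hb : 0 < b := ha.trans_le hab
  set p : ℝ := 2 * θ - 1 with hpdef
  have hp : -1 < p := by simp [hpdef]; linarith
  have hp0 : p < 0 := by simp [hpdef]; linarith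
  have h2θ : 2 * θ - 2 = p - 1 := by simp [hpdef]; ring
  have hnum : 0 < 1 - 2 * θ := by linarith
  by_cases hcase : a ^ (p - 1) ≤ R * b ^ (p - 1)
  · -- case h(a) ≤ R h(b) : use the left branch of the min
    refine le_trans (min_le_left _ _) ?_
    have hstep : 1 / (K * R) ≤ b ^ (p - 1) * (b - a) := by
      have hba : 0 ≤ b - a := by linarith
      have : 1 ≤ K * R * (b ^ (p - 1) * (b - a)) := by
        calc 1 ≤ K * a ^ (2 * θ - 2) * (b - a) := hKL
          _ = K * (a ^ (p - 1) * (b - a)) := by rw [h2θ]; ring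
          _ ≤ K * (R * b ^ (p - 1) * (b - a)) := by
              apply mul_le_mul_of_nonneg_left _ hK.le
              exact mul_le_mul_of_nonneg_right hcase hba
          _ = K * R * (b ^ (p - 1) * (b - a)) := by ring
      rw [div_le_iff₀ (by positivity)]
      linarith
    refine hstep.trans ?_
    -- Bernoulli: a^p - b^p ≥ (1-2θ) b^(p-1)(b-a)
    have hx0 : 0 < a / b := by positivity
    have hx1 : a / b ≤ 1 := (div_le_one hb).2 hab
    have hber := bern_neg hx0 hx1 hp hp0
    have hdiv : (a / b) ^ p = a ^ p / b ^ p := Real.div_rpow ha.le hb.le p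
    have hbp : 0 < b ^ p := Real.rpow_pos_of_pos hb p
    have hbp1 : b ^ (p - 1) = b ^ p / b := by
      rw [Real.rpow_sub hb, Real.rpow_one]
    have key : (1 - 2 * θ) * (b ^ (p - 1) * (b - a)) ≤ a ^ p - b ^ p := by
      have h1 : 1 + p * (a / b - 1) ≤ a ^ p / b ^ p := by rwa [hdiv] at hber
      have h2 : b ^ p * (1 + p * (a / b - 1)) ≤ a ^ p := by
        rw [← le_div_iff₀' hbp]; exact h1
      have h3 : b ^ p * (1 + p * (a / b - 1)) = b ^ p + p * (b ^ p / b) * (a - b) := by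
        field_simp
      have hnp : 1 - 2 * θ = -p := by rw [hpdef]; ring
      rw [hnp, hbp1]
      nlinarith [h2, h3]
    rw [le_div_iff₀ hnum]
    linarith [key]
  · -- case h(a) ≥ R h(b) : use the right branch of the min
    refine le_trans (min_le_right _ _) ?_
    push_neg at hcase
    set q : ℝ := p / (p - 1) with hqdef
    have hq0 : 0 < q := div_pos_of_neg_of_neg hp0 (by linarith)
    have hRb : 0 ≤ R * b ^ (p - 1) := by positivity
    have h1 : (R * b ^ (p - 1)) ^ q ≤ (a ^ (p - 1)) ^ q :=
      Real.rpow_le_rpow hRb hcase.le hq0.le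
    have h2 : (a ^ (p - 1)) ^ q = a ^ p := by
      rw [← Real.rpow_mul ha.le]
      congr 1
      rw [hqdef]
      field_simp
      exact mul_div_cancel_right₀ p (by linarith : p - 1 ≠ 0)
    have h3 : (R * b ^ (p - 1)) ^ q = R ^ q * b ^ p := by
      rw [Real.mul_rpow (by linarith) (by positivity), ← Real.rpow_mul hb.le]
      congr 2
      rw [hqdef]
      field_simp
      exact mul_div_cancel_right₀ p (by linarith : p - 1 ≠ 0)
    have hkey : R ^ q * b ^ p ≤ a ^ p := by rw [← h3, ← h2]; exact h1
    have hq2 : (2 * θ - 1) / (2 * θ - 2) = q := by rw [hqdef, h2θ]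
    rw [hq2, div_le_div_iff_of_pos_right hnum]
    nlinarith [hkey]
end

section
/- Let θ ∈ (0, 1/2), b > 0, and let s ≥ 1 and k₀ be natural numbers. Let r : ℕ → ℝ be nonincreasing with r(k) > 0 for all k, and suppose b·(1 − 2θ) ≤ r(k+s)^{2θ−1} − r(k)^{2θ−1} for every k ≥ k₀. Then for every k ≥ k₀: r(k) ≤ ( ⌊(k − k₀)/s⌋·b·(1 − 2θ) + r(k₀)^{2θ−1} )^{−1/(1 − 2θ)}. -/
/-- Sublinear-rate recursion in the KL case `θ ∈ (0, 1/2)`: a per-window increase of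
`r^{2θ−1}` by at least `b(1−2θ)` yields the `O(k^{−1/(1−2θ)})` bound. -/
theorem stmt_15 (θ b : ℝ) (hθ0 : 0 < θ) (hθ1 : θ < 1 / 2) (hb : 0 < b)
    (s k₀ : ℕ) (hs : 1 ≤ s)
    (r : ℕ → ℝ) (hmono : Antitone r) (hpos : ∀ k, 0 < r k)
    (hstep : ∀ k, k₀ ≤ k → b * (1 - 2 * θ) ≤ r (k + s) ^ (2 * θ - 1) - r k ^ (2 * θ - 1)) :
    ∀ k, k₀ ≤ k →
      r k ≤ ((((k - k₀) / s : ℕ) : ℝ) * b * (1 - 2 * θ) + r k₀ ^ (2 * θ - 1)) ^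
        (-(1 / (1 - 2 * θ))) := by
  have hθ2 : (0:ℝ) < 1 - 2 * θ := by linarith
  have he : (2 * θ - 1 : ℝ) < 0 := by linarith
  have hne : (2 * θ - 1 : ℝ) ≠ 0 := ne_of_lt he
  -- induction lemma
  have key : ∀ n : ℕ, (n : ℝ) * b * (1 - 2 * θ) + r k₀ ^ (2 * θ - 1)
      ≤ r (k₀ + n * s) ^ (2 * θ - 1) := by
    intro n
    induction n with
    | zero => simp
    | succ n ih =>
      have h1 := hstep (k₀ + n * s) (Nat.le_add_right _ _)
      have : k₀ + (n + 1) * s = k₀ + n * s + s := by ring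
      rw [this]
      push_cast
      push_cast at ih
      linarith
  intro k hk
  set n : ℕ := (k - k₀) / s with hn
  have hns : k₀ + n * s ≤ k := by
    have h := Nat.div_mul_le_self (k - k₀) s
    rw [← hn] at h
    omega
  have hle : r k ≤ r (k₀ + n * s) := hmono hns
  have h2 : r (k₀ + n * s) ^ (2 * θ - 1) ≤ r k ^ (2 * θ - 1) :=
    Real.rpow_le_rpow_of_nonpos (hpos k) hle (le_of_lt he)
  set A : ℝ := (n : ℝ) * b * (1 - 2 * θ) + r k₀ ^ (2 * θ - 1) with hA
  have hApos : 0 < A := by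
    have h3 : 0 < r k₀ ^ (2 * θ - 1) := Real.rpow_pos_of_pos (hpos k₀) _
    have h4 : 0 ≤ (n : ℝ) * b * (1 - 2 * θ) := by positivity
    linarith [h3, h4]
  have hAle : A ≤ r k ^ (2 * θ - 1) := le_trans (key n) h2
  -- apply rpow with exponent 1/(2θ-1) < 0
  have hinv : (1 / (2 * θ - 1) : ℝ) ≤ 0 := by
    apply le_of_lt; exact div_neg_of_pos_of_neg one_pos he
  have h5 : (r k ^ (2 * θ - 1)) ^ (1 / (2 * θ - 1) : ℝ) ≤ A ^ (1 / (2 * θ - 1) : ℝ) :=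
    Real.rpow_le_rpow_of_nonpos hApos hAle hinv
  have h6 : (r k ^ (2 * θ - 1)) ^ (1 / (2 * θ - 1) : ℝ) = r k := by
    rw [← Real.rpow_mul (le_of_lt (hpos k)), mul_one_div, div_self hne, Real.rpow_one]
  have h7 : (-(1 / (1 - 2 * θ)) : ℝ) = 1 / (2 * θ - 1) := by
    field_simp
    ring
  rw [h7]
  calc r k = (r k ^ (2 * θ - 1)) ^ (1 / (2 * θ - 1) : ℝ) := h6.symm
    _ ≤ A ^ (1 / (2 * θ - 1) : ℝ) := h5
end
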